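/- Let F_q be a finite field of odd order q and let β ∈ F_q be nonzero and not θ-periodic. Let h be the least positive integer k such that θ^[k](β) is θ-periodic (such k exists since F_q is finite). Then h ≤ ν₂(q − 1), and if h = ν₂(q − 1) then there is no x ∈ F_q with θ(x) = β. -/
import Mathlib

/-- The map `θ(x) = (x + x⁻¹)/2` on a field (with the convention `0⁻¹ = 0`). -/
noncomputable def theta {K : Type*} [Field K] (x : K) : K := (x + x⁻¹) / 2

/-- An element `x` is θ-periodic if `θ^[k](x) = x` for some `k ≥ 1`. -/
def IsThetaPeriodic {K : Type*} [Field K] (x : K) : Prop :=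
  ∃ k : ℕ, 1 ≤ k ∧ theta^[k] x = x

noncomputable def phiAux {K : Type*} [Field K] (x : K) : K := (x + 1) / (x - 1)

section Aux
variable {K : Type*} [Field K]

lemma phi_ne_one (h2 : (2 : K) ≠ 0) {x : K} (hx : x ≠ 1) : phiAux x ≠ 1 := by
  unfold phiAux
  intro hcont
  rw [div_eq_one_iff_eq (sub_ne_zero.mpr hx)] at hcont
  exact h2 (by linear_combination hcont)

lemma phi_ne_zero {x : K} (hx1 : x ≠ 1) (hxn1 : x ≠ -1) : phiAux x ≠ 0 := by
  unfold phiAux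
  rw [div_ne_zero_iff]
  exact ⟨fun hc => hxn1 (by linear_combination hc), sub_ne_zero.mpr hx1⟩

lemma phi_ne_neg_one (h2 : (2 : K) ≠ 0) {x : K} (hx0 : x ≠ 0) (hx1 : x ≠ 1) :
    phiAux x ≠ -1 := by
  unfold phiAux
  intro hcont
  rw [div_eq_iff (sub_ne_zero.mpr hx1)] at hcont
  have h2x : 2 * x = 0 := by linear_combination hcont
  rcases mul_eq_zero.mp h2x with h | h
  · exact h2 h
  · exact hx0 h

lemma phi_phi (h2 : (2 : K) ≠ 0) {x : K} (hx : x ≠ 1) : phiAux (phiAux x) = x := by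
  have h1 : x - 1 ≠ 0 := sub_ne_zero.mpr hx
  unfold phiAux
  have hd : (x + 1) / (x - 1) - 1 = 2 / (x - 1) := by field_simp; norm_num
  have hn : (x + 1) / (x - 1) + 1 = (2 * x) / (x - 1) := by field_simp; ring
  rw [hd, hn]
  rw [div_div_div_cancel_right₀]
  · exact mul_div_cancel_left₀ _ h2
  · exact h1

lemma theta_phi (h2 : (2 : K) ≠ 0) {z : K} (h0 : z ≠ 0) (hz1 : z ≠ 1) (hn1 : z ≠ -1) :
    theta (phiAux z) = phiAux (z ^ 2) := by
  have hm1 : z - 1 ≠ 0 := sub_ne_zero.mpr hz1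
  have hp1 : z + 1 ≠ 0 := fun hc => hn1 (by linear_combination hc)
  unfold theta phiAux
  rw [inv_div]
  have hsq : z ^ 2 - 1 ≠ 0 := by
    intro hc
    rcases mul_self_eq_one_iff.mp (by linear_combination hc : z * z = 1) with h | h
    · exact hz1 h
    · exact hn1 h
  field_simp
  ring

lemma theta_orbit (h2 : (2 : K) ≠ 0) {y : K} (hy0 : y ≠ 0) (k : ℕ)
    (hk : ∀ i < k, y ^ 2 ^ i ≠ 1 ∧ y ^ 2 ^ i ≠ -1) :
    theta^[k] (phiAux y) = phiAux (y ^ 2 ^ k) := by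
  induction k with
  | zero => simp
  | succ k ih =>
    have hstep := theta_phi h2 (pow_ne_zero _ hy0) (hk k (Nat.lt_succ_self k)).1
      (hk k (Nat.lt_succ_self k)).2
    rw [Function.iterate_succ_apply', ih (fun i hi => hk i (hi.trans (Nat.lt_succ_self k))),
      hstep, ← pow_mul, ← pow_succ]

lemma periodic_of_odd_order (h2 : (2 : K) ≠ 0) {z : K} (h0 : z ≠ 0) (hz1 : z ≠ 1)
    (hn1 : z ≠ -1) (hodd : Odd (orderOf z)) :
    ∃ k : ℕ, 1 ≤ k ∧ theta^[k] (phiAux z) = phiAux z := by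
  set m := orderOf z with hm
  have hm1 : m ≠ 1 := fun hc => hz1 (orderOf_eq_one_iff.mp hc)
  have hmpos : 0 < m := hodd.pos
  have hcop : Nat.Coprime 2 m := hodd.coprime_two_left
  set t := m.totient with ht
  have htpos : 0 < t := Nat.totient_pos.mpr hmpos
  have hmod : 2 ^ t ≡ 1 [MOD m] := Nat.ModEq.pow_totient hcop
  have hdvd : m ∣ 2 ^ t - 1 := (Nat.modEq_iff_dvd' Nat.one_le_two_pow).mp hmod.symm
  -- z ^ 2 ^ t = z
  obtain ⟨c, hc⟩ := hdvd
  have hzt : z ^ 2 ^ t = z := by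
    have h1le : 1 ≤ 2 ^ t := Nat.one_le_two_pow
    calc z ^ 2 ^ t = z ^ (2 ^ t - 1) * z := by
          rw [← pow_succ, Nat.sub_add_cancel h1le]
      _ = (z ^ m) ^ c * z := by rw [hc, pow_mul]
      _ = z := by rw [pow_orderOf_eq_one, one_pow, one_mul]
  have hne : ∀ i, z ^ 2 ^ i ≠ 1 ∧ z ^ 2 ^ i ≠ -1 := by
    intro i
    have hpow1 : ∀ j : ℕ, z ^ 2 ^ j = 1 → False := by
      intro j hj
      have hd : m ∣ 2 ^ j := orderOf_dvd_of_pow_eq_one hj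
      exact hm1 ((Nat.Coprime.pow_right j hcop.symm).eq_one_of_dvd hd)
    constructor
    · exact fun hc' => hpow1 i hc'
    · intro hc'
      exact hpow1 (i + 1) (by rw [pow_succ, pow_mul, hc']; ring)
  exact ⟨t, htpos, by rw [theta_orbit h2 h0 t (fun i _ => hne i), hzt]⟩

lemma theta_main (h2 : (2 : K) ≠ 0) {y : K} (hy0 : y ≠ 0) (hy1 : y ≠ 1) (hyn1 : y ≠ -1)
    (k : ℕ) (hodd : Odd (orderOf (y ^ 2 ^ k))) :
    ∃ t : ℕ, 1 ≤ t ∧ theta^[t] (theta^[k] (phiAux y)) = theta^[k] (phiAux y) := by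
  have hone_ne : (1 : K) ≠ -1 := fun hc => h2 (by linear_combination hc)
  by_cases hex : ∃ i, i < k ∧ (y ^ 2 ^ i = 1 ∨ y ^ 2 ^ i = -1)
  · -- orbit hits 0, then stays there
    classical
    set i₀ := Nat.find hex with hi₀
    obtain ⟨hik, hi⟩ : i₀ < k ∧ (y ^ 2 ^ i₀ = 1 ∨ y ^ 2 ^ i₀ = -1) := Nat.find_spec hex
    have hprev : ∀ j < i₀, y ^ 2 ^ j ≠ 1 ∧ y ^ 2 ^ j ≠ -1 := by
      intro j hj
      have hnm := Nat.find_min hex hj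
      push_neg at hnm
      exact hnm (hj.trans hik)
    -- in fact y ^ 2 ^ i₀ = -1
    have hneg : y ^ 2 ^ i₀ = -1 := by
      rcases hi with hone | hneg
      · exfalso
        rcases Nat.eq_zero_or_pos i₀ with h0 | hpos
        · rw [h0, pow_zero, pow_one] at hone; exact hy1 hone
        · obtain ⟨j, hj⟩ := Nat.exists_eq_add_of_lt hpos
          rw [hj] at hone
          have hsq : y ^ 2 ^ (0 + j) * y ^ 2 ^ (0 + j) = 1 := by
            rw [← pow_add, ← two_mul, ← pow_succ']; exact hone
          rcases mul_self_eq_one_iff.mp hsq with h | h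
          · exact (hprev (0 + j) (by omega)).1 h
          · exact (hprev (0 + j) (by omega)).2 h
      · exact hneg
    have horb : theta^[i₀] (phiAux y) = 0 := by
      rw [theta_orbit h2 hy0 i₀ hprev, hneg]
      unfold phiAux
      norm_num
    have hzero : theta^[k] (phiAux y) = 0 := by
      have : k = (k - i₀) + i₀ := by omega
      rw [this, Function.iterate_add_apply, horb]
      have hfix : theta (0 : K) = 0 := by unfold theta; simp
      exact Function.iterate_fixed hfix _
    refine ⟨1, le_refl 1, ?_⟩
    rw [hzero]
    unfold theta; simp
  · push_neg at hex
    have hprev : ∀ i < k, y ^ 2 ^ i ≠ 1 ∧ y ^ 2 ^ i ≠ -1 := fun i hi => hex i hi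
    have hz0 : y ^ 2 ^ k ≠ 0 := pow_ne_zero _ hy0
    have hz1 : y ^ 2 ^ k ≠ 1 := by
      rcases Nat.eq_zero_or_pos k with h0 | hpos
      · rw [h0, pow_zero, pow_one]; exact hy1
      · intro hc
        obtain ⟨j, rfl⟩ := Nat.exists_eq_add_of_lt hpos
        have hsq : y ^ 2 ^ (0 + j) * y ^ 2 ^ (0 + j) = 1 := by
          rw [← pow_add, ← two_mul, ← pow_succ']; exact hc
        rcases mul_self_eq_one_iff.mp hsq with h | h
        · exact (hprev (0 + j) (Nat.lt_succ_self _)).1 h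
        · exact (hprev (0 + j) (Nat.lt_succ_self _)).2 h
    have hzn1 : y ^ 2 ^ k ≠ -1 := by
      intro hc
      rw [hc] at hodd
      have : orderOf (-1 : K) = 2 := orderOf_eq_prime (by ring) hone_ne.symm
      rw [this] at hodd
      exact absurd hodd (by decide)
    obtain ⟨t, ht1, ht⟩ := periodic_of_odd_order h2 hz0 hz1 hzn1 hodd
    refine ⟨t, ht1, ?_⟩
    rw [theta_orbit h2 hy0 k hprev]
    exact ht

end Aux

/-- Let `F_q` be a finite field of odd order `q`, and `β ∈ F_q` nonzero and not
θ-periodic. Let `h` be the least positive integer `k` such that `θ^[k](β)` is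
θ-periodic. Then `h ≤ ν₂(q − 1)`, and if `h = ν₂(q − 1)` then `β` has no θ-preimage. -/
theorem theta_level_le_and_leaf (F : Type*) [Field F] [Fintype F]
    (hq : Odd (Fintype.card F)) (β : F) (hβ : β ≠ 0) (hnp : ¬ IsThetaPeriodic β)
    (h : ℕ) (hpos : 1 ≤ h) (hper : IsThetaPeriodic (theta^[h] β))
    (hmin : ∀ k : ℕ, 1 ≤ k → IsThetaPeriodic (theta^[k] β) → h ≤ k) :
    h ≤ padicValNat 2 (Fintype.card F - 1) ∧
    (h = padicValNat 2 (Fintype.card F - 1) → ¬ ∃ x : F, theta x = β) := by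
  classical
  -- 2 ≠ 0 in F
  have h2 : (2 : F) ≠ 0 := by
    intro hc
    have hdvd : ringChar F ∣ 2 := by
      have := (ringChar.spec F 2).mp (by exact_mod_cast hc)
      exact this
    have hp : (ringChar F).Prime := CharP.char_is_prime F (ringChar F)
    have hchar2 : ringChar F = 2 := (Nat.prime_dvd_prime_iff_eq hp Nat.prime_two).mp hdvd
    have heven := FiniteField.even_card_of_char_two (F := F) hchar2
    rw [Nat.odd_iff] at hq
    omega
  have hβ1 : β ≠ 1 := by
    intro hc
    exact hnp ⟨1, le_refl 1, by
      rw [hc, Function.iterate_one]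
      unfold theta
      rw [inv_one, one_add_one_eq_two, div_self h2]⟩
  have hβn1 : β ≠ -1 := by
    intro hc
    refine hnp ⟨1, le_refl 1, ?_⟩
    rw [hc, Function.iterate_one]
    unfold theta
    rw [inv_neg, inv_one]
    rw [div_eq_iff h2]; ring
  set y := phiAux β with hy
  have hy0 : y ≠ 0 := phi_ne_zero hβ1 hβn1
  have hy1 : y ≠ 1 := phi_ne_one h2 hβ1
  have hyn1 : y ≠ -1 := phi_ne_neg_one h2 hβ hβ1
  have hβy : phiAux y = β := phi_phi h2 hβ1
  -- numerics
  set q := Fintype.card F with hqdef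
  have hq2 : 2 ≤ q := Fintype.one_lt_card
  have hn0 : q - 1 ≠ 0 := by omega
  set V := padicValNat 2 (q - 1) with hV
  have hVfact : (q - 1).factorization 2 = V := Nat.factorization_def _ Nat.prime_two
  have h2dvd : 2 ∣ q - 1 := by
    rw [Nat.odd_iff] at hq; omega
  have hV1 : 1 ≤ V := by
    have := Nat.Prime.factorization_pos_of_dvd Nat.prime_two hn0 h2dvd
    omega
  set r := (q - 1) / 2 ^ V with hr
  have hqr : q - 1 = 2 ^ V * r := by
    have := Nat.ordProj_mul_ordCompl_eq_self (q - 1) 2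
    rw [hVfact] at this
    exact this.symm
  have hrodd : Odd r := by
    have hnd : ¬ 2 ∣ (q - 1) / 2 ^ ((q-1).factorization 2) :=
      Nat.not_dvd_ordCompl Nat.prime_two hn0
    rw [hVfact] at hnd
    exact Nat.odd_iff.mpr (by omega)
  have hodd_of_pow_r : ∀ z : F, z ≠ 0 → z ^ r = 1 → Odd (orderOf z) := by
    intro z hz0 hzr
    have hd : orderOf z ∣ r := orderOf_dvd_of_pow_eq_one hzr
    rcases Nat.even_or_odd (orderOf z) with he | ho
    · exfalso
      have h2d : 2 ∣ orderOf z := even_iff_two_dvd.mp he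
      have : 2 ∣ r := h2d.trans hd
      rw [Nat.odd_iff] at hrodd; omega
    · exact ho
  -- Part 1
  have hpart1 : h ≤ V := by
    have hodd : Odd (orderOf (y ^ 2 ^ V)) := by
      apply hodd_of_pow_r _ (pow_ne_zero _ hy0)
      rw [← pow_mul, ← hqr]
      exact FiniteField.pow_card_sub_one_eq_one y hy0
    obtain ⟨t, ht1, ht⟩ := theta_main h2 hy0 hy1 hyn1 V hodd
    exact hmin V hV1 ⟨t, ht1, by rw [hβy] at ht; exact ht⟩
  refine ⟨hpart1, ?_⟩
  -- Part 2
  rintro hEq ⟨x, hx⟩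
  have hx0 : x ≠ 0 := by
    intro hc; rw [hc] at hx
    apply hβ
    rw [← hx]; unfold theta; simp
  have hx1 : x ≠ 1 := by
    intro hc; rw [hc] at hx
    apply hβ1
    rw [← hx]; unfold theta
    rw [inv_one, one_add_one_eq_two, div_self h2]
  have hxn1 : x ≠ -1 := by
    intro hc; rw [hc] at hx
    apply hβn1
    rw [← hx]; unfold theta
    rw [inv_neg, inv_one, div_eq_iff h2]; ring
  set w := phiAux x with hw
  have hw0 : w ≠ 0 := phi_ne_zero hx1 hxn1
  have hw1 : w ≠ 1 := phi_ne_one h2 hx1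
  have hwn1 : w ≠ -1 := phi_ne_neg_one h2 hx0 hx1
  have hβw : β = phiAux (w ^ 2) := by
    rw [← hx, ← theta_phi h2 hw0 hw1 hwn1, hw, phi_phi h2 hx1]
  have hw2ne1 : w ^ 2 ≠ 1 := by
    intro hc
    rcases mul_self_eq_one_iff.mp (show w * w = 1 by rw [← pow_two]; exact hc) with hh | hh
    · exact hw1 hh
    · exact hwn1 hh
  have hyw : y = w ^ 2 := by
    rw [hy, hβw, phi_phi h2 hw2ne1]
  have hodd : Odd (orderOf (y ^ 2 ^ (V - 1))) := by
    apply hodd_of_pow_r _ (pow_ne_zero _ hy0)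
    rw [hyw, ← pow_mul, ← pow_mul]
    have harith : 2 * (2 ^ (V - 1) * r) = (q - 1) := by
      rw [hqr]
      have : 2 * 2 ^ (V - 1) = 2 ^ V := by
        rw [← pow_succ']
        congr 1
        omega
      rw [← mul_assoc, this]
    rw [harith]
    exact FiniteField.pow_card_sub_one_eq_one w hw0
  obtain ⟨t, ht1, ht⟩ := theta_main h2 hy0 hy1 hyn1 (V - 1) hodd
  rw [hβy] at ht
  rcases Nat.eq_zero_or_pos (V - 1) with hV0 | hVpos
  · rw [hV0] at ht
    simp only [Function.iterate_zero, id_eq] at ht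
    exact hnp ⟨t, ht1, ht⟩
  · have := hmin (V - 1) hVpos ⟨t, ht1, ht⟩
    omega
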